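/- arXiv:math/0012256 — 2 statements merged into one kernel-verified Lean document; each statement's English description precedes it below -/
import Mathlib

section
/- Under the map τ# sending a differential k-form w = w_{i₁…i_k} dx^{i₁}∧…∧dx^{i_k} on M to the element of R[x]⊗Λ(θ₁,…,θₙ) given by the Berezin integral ∫ w(x,ξ) exp(θᵢξⁱ) dⁿξ (where w(x,ξ) = w_{i₁…i_k} ξ^{i₁}⋯ξ^{i_k}), the exterior differential corresponds to Δ₀: Δ₀(τ# w) = τ#(dw), where Δ₀ = Σᵢ ∂²/∂xⁱ∂θᵢ. -/
open scoped BigOperators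

noncomputable section

namespace OddSymp

variable (R : Type*) [CommRing R] (n : ℕ)

/-- The superalgebra `A = R[x¹,…,xⁿ] ⊗ Λ(θ₁,…,θₙ)`, represented by its coefficient
functions: the value at a finset `S ⊆ {1,…,n}` is the coefficient (a polynomial in
the even variables `x`) of the monomial `θ_S` (product in increasing order). -/
abbrev SAlg := Finset (Fin n) → MvPolynomial (Fin n) R

variable {R n}

/-- Koszul sign arising when multiplying `θ_S · θ_T` (for disjoint `S`, `T`). -/
def eps (S T : Finset (Fin n)) : ℤ :=
  (-1 : ℤ) ^ ((S ×ˢ T).filter (fun p => p.2 < p.1)).card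

/-- The supercommutative product on `A`. -/
def mul (f g : SAlg R n) : SAlg R n := fun U =>
  ∑ S ∈ U.powerset, eps S (U \ S) • (f S * g (U \ S))

/-- The unit of `A`. -/
def one : SAlg R n := fun S => if S = ∅ then 1 else 0

/-- The odd generator `θ_i`. -/
def theta (i : Fin n) : SAlg R n := fun S => if S = {i} then 1 else 0

/-- The even partial derivative `∂/∂xⁱ`. -/
def pdx (i : Fin n) (f : SAlg R n) : SAlg R n := fun S => MvPolynomial.pderiv i (f S)

/-- The left odd partial derivative `∂/∂θᵢ`. -/
def pdθ (i : Fin n) (f : SAlg R n) : SAlg R n := fun T =>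
  if i ∈ T then 0
  else ((-1 : ℤ) ^ ((T.filter (fun j => j < i)).card)) • f (insert i T)

/-- The canonical Batalin–Vilkovisky operator `Δ₀ = Σᵢ ∂²/∂xⁱ∂θᵢ` in Darboux
coordinates. -/
def delta0 (f : SAlg R n) : SAlg R n := ∑ i : Fin n, pdx i (pdθ i f)

/-- The canonical odd Poisson (Buttin) bracket
`{f,g} = Σᵢ (∂f/∂xⁱ ∂g/∂θᵢ + (−1)^{p(f)} ∂f/∂θᵢ ∂g/∂xⁱ)`, where `p` is the parity
of (the homogeneous element) `f`, passed as the parameter `p`. -/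
def bracket (p : ℕ) (f g : SAlg R n) : SAlg R n :=
  ∑ i : Fin n,
    (mul (pdx i f) (pdθ i g) + ((-1 : ℤ) ^ p) • mul (pdθ i f) (pdx i g))

/-- `f` is ℤ/2-homogeneous of parity `p`. -/
def IsHomog (f : SAlg R n) (p : ℕ) : Prop := ∀ S, f S ≠ 0 → S.card % 2 = p % 2

/-- `f` is homogeneous of degree `d` in the odd variables `θ`. -/
def ThetaHomog (f : SAlg R n) (d : ℕ) : Prop := ∀ S, f S ≠ 0 → S.card = d

end OddSymp

end

open OddSymp

noncomputable section

/-- The odd Fourier transform `τ#` sending (the coefficient function of) a differential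
form `w(x,ξ)` on `ℝⁿ` to the semidensity coefficient `∫ w(x,ξ) exp(θᵢξⁱ) dⁿξ`:
the Berezin integral turns the coefficient of `ξ_S` into a coefficient of `θ_{Sᶜ}`
with the Koszul sign `(−1)^{Σ_{j∈Sᶜ} j}` (0-based indices). -/
def tau {R : Type*} [CommRing R] {n : ℕ} (w : SAlg R n) : SAlg R n :=
  fun T => ((-1 : ℤ) ^ (∑ j ∈ Tᶜ, (j : ℕ))) • w Tᶜ

/-- The exterior differential `d = Σᵢ ξⁱ ∂/∂xⁱ` on differential forms, in the odd
tangent bundle model (forms are polynomials in odd variables `ξ`, here encoded by the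
same coefficient model `SAlg`). -/
def dext {R : Type*} [CommRing R] {n : ℕ} (w : SAlg R n) : SAlg R n :=
  ∑ i : Fin n, mul (theta i) (pdx i w)

/-! The odd Fourier transform `τ#` intertwines `∂/∂θᵢ` with multiplication by `ξⁱ` and commutes
with `∂/∂xⁱ`; since `d = Σᵢ ξⁱ ∂/∂xⁱ` and `Δ₀ = Σᵢ ∂/∂xⁱ ∂/∂θᵢ`, this gives `Δ₀ ∘ τ# = τ# ∘ d`.
The intertwining relation is a sign count: at `θ_U` with `i ∉ U` and `V = Uᶜ`, both sides carry
the coefficient `w (V.erase i)`, and the signs agree because `Σ_{j ∈ V} j = i + Σ_{j ∈ V \ {i}} j`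
while the indices below `i` split between `U` and `V`: `#{j ∈ U | j < i} + #{j ∈ V | j < i} = i`.
-/

namespace OddSymp

variable {R : Type*} [CommRing R] {n : ℕ}

theorem eps_singleton (i : Fin n) (T : Finset (Fin n)) :
    eps {i} T = (-1 : ℤ) ^ (T.filter (· < i)).card := by
  rw [eps, Finset.singleton_product, Finset.filter_map, Finset.card_map]
  rfl

theorem mul_theta_apply (i : Fin n) (g : SAlg R n) (U : Finset (Fin n)) :
    mul (theta i) g U = if i ∈ U then eps {i} (U.erase i) • g (U.erase i) else 0 := by
  simp only [mul, theta, ite_mul, one_mul, zero_mul, smul_ite, smul_zero]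
  rw [Finset.sum_ite_eq' U.powerset {i}]
  simp [Finset.sdiff_singleton_eq_erase]

theorem pdx_mul_theta (i j : Fin n) (g : SAlg R n) :
    pdx i (mul (theta j) g) = mul (theta j) (pdx i g) := by
  funext U
  simp only [pdx, mul_theta_apply]
  split_ifs <;> simp

theorem card_filter_lt_add_card_compl_filter_lt (U : Finset (Fin n)) (i : Fin n) :
    (U.filter (· < i)).card + (Uᶜ.filter (· < i)).card = i := by
  rw [← Finset.card_union_of_disjoint
      (disjoint_compl_right.mono (Finset.filter_subset _ _) (Finset.filter_subset _ _)),
    ← Finset.filter_union, Finset.union_compl, ← Fin.card_Iio]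
  congr 1
  ext
  simp

theorem neg_one_pow_sum_compl_mul_eps (U : Finset (Fin n)) {i : Fin n} (hi : i ∉ U) :
    (-1 : ℤ) ^ (∑ j ∈ Uᶜ, (j : ℕ)) * eps {i} (Uᶜ.erase i) =
      (-1) ^ (U.filter (· < i)).card * (-1) ^ (∑ j ∈ Uᶜ.erase i, (j : ℕ)) := by
  have hi' : i ∈ Uᶜ := Finset.mem_compl.2 hi
  have hsum : ∑ j ∈ Uᶜ, (j : ℕ) = i + ∑ j ∈ Uᶜ.erase i, (j : ℕ) :=
    (Finset.add_sum_erase _ _ hi').symm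
  have hbelow : (Uᶜ.erase i).filter (· < i) = Uᶜ.filter (· < i) := by
    rw [Finset.filter_erase, Finset.erase_eq_of_notMem (by simp)]
  rw [eps_singleton, hbelow, hsum, ← card_filter_lt_add_card_compl_filter_lt U i]
  simp only [← pow_add]
  rw [show ∀ a b c : ℕ, a + c + b + c = a + b + 2 * c by intros; ring, pow_add _ (_ + _),
    pow_mul]
  simp

theorem pdθ_tau (i : Fin n) (w : SAlg R n) : pdθ i (tau w) = tau (mul (theta i) w) := by
  funext U
  simp only [pdθ, tau, mul_theta_apply, Finset.mem_compl]
  by_cases hi : i ∈ U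
  · simp [hi]
  · rw [if_neg hi, if_pos hi, Finset.compl_insert, smul_smul, smul_smul,
      neg_one_pow_sum_compl_mul_eps U hi]

theorem pdx_tau (i : Fin n) (w : SAlg R n) : pdx i (tau w) = tau (pdx i w) := by
  funext U
  simp [pdx, tau]

theorem tau_sum {ι : Type*} (s : Finset ι) (f : ι → SAlg R n) :
    tau (∑ i ∈ s, f i) = ∑ i ∈ s, tau (f i) := by
  funext U
  simp [tau, Finset.sum_apply, Finset.smul_sum]

end OddSymp

/-- under `τ#` the exterior differential corresponds to `Δ₀`:
`Δ₀(τ# w) = τ#(dw)`. -/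
theorem stmt11 {R : Type*} [CommRing R] {n : ℕ} (w : SAlg R n) :
    delta0 (tau w) = tau (dext w) := by
  simp only [delta0, dext, pdθ_tau, pdx_tau, pdx_mul_theta, tau_sum]

end
end

section
/- Let ρ(x,θ) be an even invertible element of A = R[x¹,…,xⁿ]⊗Λ(θ₁,…,θₙ) (numerical part nonzero), and define Δ_ρ f = Δ₀ f + (1/2){log ρ, f} where Δ₀ = Σᵢ∂²/∂xⁱ∂θᵢ. Then Δ_ρ² f = {σ, f} where σ = ρ^{−1/2} Δ₀(ρ^{1/2}); in particular Δ_ρ² = 0 if and only if Δ₀(√ρ) is a constant multiple ν·√ρ with {ν,·} = 0 (ν a constant), and Δ₀(√ρ) = 0 implies Δ_ρ² = 0. -/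
/-!
Expanding `Δ_ρ² = (Δ₀ + ½{l,·})²` with `l = log ρ` even: `Δ₀² = 0`; the cross term
`Δ₀{l,f} + {l,Δ₀f}` equals `{Δ₀l, f}`; and `{l,{l,f}} = {∑ⱼ ∂l/∂θⱼ ∂l/∂xʲ, f}` is the Jacobi
identity. Hence `Δ_ρ² = {σ,·}` with `σ = ½Δ₀l + ¼∑ⱼ ∂l/∂θⱼ ∂l/∂xʲ`, and the chain rule
`∂s = ½(∂l)s` turns `Δ₀s` into `σ·s`, i.e. `σ = s⁻¹Δ₀s`. Each identity is checked on the
coefficients of the Grassmann monomials `θ_S`; the second-order terms cancel in pairs under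
`i ↔ j`.
-/

open scoped BigOperators

open OddSymp

noncomputable section

/-- The operator `Δ_ρ f = Δ₀ f + (1/2){log ρ, f}`, where `l = log ρ` is even. -/
def DeltaRho {n : ℕ} (l : SAlg ℝ n) (f : SAlg ℝ n) : SAlg ℝ n :=
  delta0 f + ((2 : ℝ)⁻¹) • bracket 0 l f


namespace OddSymp

open Finset

section CommRing

variable {R : Type*} [CommRing R] {n : ℕ}

section Sign

lemma eps_empty_left (T : Finset (Fin n)) : eps ∅ T = 1 := by simp [eps]

lemma eps_empty_right (S : Finset (Fin n)) : eps S ∅ = 1 := by simp [eps]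

lemma eps_union_left {S T : Finset (Fin n)} (h : Disjoint S T) (U : Finset (Fin n)) :
    eps (S ∪ T) U = eps S U * eps T U := by
  rw [eps, eps, eps, ← pow_add, union_product, filter_union,
    card_union_of_disjoint (disjoint_filter_filter (disjoint_product.2 (.inl h)))]

lemma eps_union_right (S : Finset (Fin n)) {T U : Finset (Fin n)} (h : Disjoint T U) :
    eps S (T ∪ U) = eps S T * eps S U := by
  rw [eps, eps, eps, ← pow_add, product_union, filter_union,
    card_union_of_disjoint (disjoint_filter_filter (disjoint_product.2 (.inr h)))]

lemma eps_singleton_left (i : Fin n) (X : Finset (Fin n)) :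
    eps {i} X = (-1) ^ #{j ∈ X | j < i} := by
  rw [eps, singleton_product, filter_map, card_map]
  rfl

lemma eps_singleton_right (X : Finset (Fin n)) (i : Fin n) :
    eps X {i} = (-1) ^ #{j ∈ X | i < j} := by
  rw [eps, product_singleton, filter_map, card_map]
  rfl

lemma eps_insert_left {i : Fin n} {S : Finset (Fin n)} (h : i ∉ S) (X : Finset (Fin n)) :
    eps (insert i S) X = (-1) ^ #{j ∈ X | j < i} * eps S X := by
  rw [insert_eq, eps_union_left (disjoint_singleton_left.2 h), eps_singleton_left]

lemma eps_insert_right (S : Finset (Fin n)) {i : Fin n} {X : Finset (Fin n)} (h : i ∉ X) :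
    eps S (insert i X) = (-1) ^ #{j ∈ S | i < j} * eps S X := by
  rw [insert_eq, eps_union_right S (disjoint_singleton_left.2 h), eps_singleton_right]

lemma eps_swap {S T : Finset (Fin n)} (h : Disjoint S T) :
    eps T S = (-1) ^ (#S * #T) * eps S T := by
  have hcount : #{p ∈ T ×ˢ S | p.2 < p.1} + #{p ∈ S ×ˢ T | p.2 < p.1} = #S * #T := by
    rw [← map_swap_product, filter_map, card_map, ← card_product S T,
      ← card_filter_add_card_filter_not (s := S ×ˢ T) (fun p => p.1 < p.2)]
    congr 2
    refine filter_congr fun p hp => ?_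
    have hne : p.1 ≠ p.2 := fun he =>
      disjoint_left.1 h (mem_product.1 hp).1 (he ▸ (mem_product.1 hp).2)
    rw [not_lt]
    exact ⟨le_of_lt, fun h => lt_of_le_of_ne h hne.symm⟩
  rw [eps, eps, ← hcount, pow_add, mul_assoc, ← pow_add, ← two_mul, pow_mul]
  simp

lemma neg_one_pow_card_filter_lt_add_gt {i : Fin n} {S : Finset (Fin n)} (h : i ∉ S) :
    ((-1 : ℤ) ^ #{j ∈ S | j < i}) * (-1) ^ #{j ∈ S | i < j} = (-1) ^ #S := by
  rw [← pow_add,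
    ← card_union_of_disjoint (disjoint_filter.2 fun _ _ h₁ h₂ => lt_asymm h₁ h₂), ← filter_or]
  congr 2
  exact filter_true_of_mem fun j hj => lt_or_gt_of_ne (ne_of_mem_of_not_mem hj h)

end Sign

lemma IsHomog.neg_one_pow_card {f : SAlg R n} {p : ℕ} (hf : IsHomog f p) {S : Finset (Fin n)}
    (hS : f S ≠ 0) : (-1 : ℤ) ^ #S = (-1) ^ p := by
  rw [neg_one_pow_eq_pow_mod_two, hf S hS, ← neg_one_pow_eq_pow_mod_two]

section Product

lemma mul_zero_left (g : SAlg R n) : mul 0 g = 0 := by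
  funext U; simp [mul]

lemma mul_zero_right (f : SAlg R n) : mul f 0 = 0 := by
  funext U; simp [mul]

lemma mul_add_left (f g h : SAlg R n) : mul (f + g) h = mul f h + mul g h := by
  funext U; simp only [mul, Pi.add_apply, add_mul, smul_add, sum_add_distrib]

lemma mul_add_right (f g h : SAlg R n) : mul f (g + h) = mul f g + mul f h := by
  funext U; simp only [mul, Pi.add_apply, mul_add, smul_add, sum_add_distrib]

lemma mul_smul_left (c : R) (f g : SAlg R n) : mul (c • f) g = c • mul f g := by
  funext U
  simp only [mul, Pi.smul_apply, smul_sum, smul_mul_assoc]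
  exact sum_congr rfl fun S _ => smul_comm _ _ _

lemma mul_smul_right (c : R) (f g : SAlg R n) : mul f (c • g) = c • mul f g := by
  funext U
  simp only [mul, Pi.smul_apply, smul_sum, mul_smul_comm]
  exact sum_congr rfl fun S _ => smul_comm _ _ _

lemma mul_neg_left (f g : SAlg R n) : mul (-f) g = -mul f g := by
  funext U; simp [mul]

lemma mul_neg_right (f g : SAlg R n) : mul f (-g) = -mul f g := by
  funext U; simp [mul]

lemma mul_sum_left {ι : Type*} (s : Finset ι) (f : ι → SAlg R n) (g : SAlg R n) :
    mul (∑ k ∈ s, f k) g = ∑ k ∈ s, mul (f k) g := by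
  funext U
  simp only [mul, Finset.sum_apply, sum_mul, smul_sum]
  exact sum_comm

lemma mul_sum_right {ι : Type*} (s : Finset ι) (f : SAlg R n) (g : ι → SAlg R n) :
    mul f (∑ k ∈ s, g k) = ∑ k ∈ s, mul f (g k) := by
  funext U
  simp only [mul, Finset.sum_apply, mul_sum, smul_sum]
  exact sum_comm

protected lemma one_mul (f : SAlg R n) : mul one f = f := by
  funext U
  rw [mul, sum_eq_single ∅ (fun S _ hS => by simp [one, hS]) (by simp)]
  simp [one, eps_empty_left]

protected lemma mul_one (f : SAlg R n) : mul f one = f := by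
  funext U
  rw [mul, sum_eq_single U (fun S hS hne => ?_) (by simp)]
  · simp [one, eps_empty_right]
  · have : U \ S ≠ ∅ := fun h =>
      hne (subset_antisymm (mem_powerset.1 hS) (sdiff_eq_empty_iff_subset.1 h))
    simp [one, this]

protected lemma mul_assoc (f g h : SAlg R n) : mul (mul f g) h = mul f (mul g h) := by
  funext U
  simp only [mul, sum_mul, mul_sum, smul_sum, smul_mul_assoc, mul_smul_comm, smul_smul]
  rw [sum_comm' (t' := U.powerset) (s' := fun A => Icc A U) fun S A => by
    simp only [mem_powerset, mem_Icc]
    exact ⟨fun h => ⟨⟨h.2, h.1⟩, h.2.trans h.1⟩, fun h => ⟨h.1.2, h.1.1⟩⟩]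
  refine sum_congr rfl fun A hA => ?_
  have hdisj : ∀ B ∈ (U \ A).powerset, Disjoint A B := fun B hB =>
    disjoint_of_subset_right (mem_powerset.1 hB) disjoint_sdiff
  rw [Icc_eq_image_powerset (mem_powerset.1 hA), sum_image fun B hB B' hB' hBB' => by
    rw [← union_sdiff_cancel_left (hdisj B hB), hBB', union_sdiff_cancel_left (hdisj B' hB')]]
  refine sum_congr rfl fun B hB => ?_
  rw [union_sdiff_cancel_left (hdisj B hB), sdiff_union_distrib, ← Finset.sdiff_sdiff_left',
    _root_.mul_assoc, eps_union_left (hdisj B hB), ← union_sdiff_of_subset (mem_powerset.1 hB),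
    eps_union_right A disjoint_sdiff, union_sdiff_of_subset (mem_powerset.1 hB)]
  ring_nf

end Product

section Parity

lemma isHomog_mul {f g : SAlg R n} {p q : ℕ} (hf : IsHomog f p) (hg : IsHomog g q) :
    IsHomog (mul f g) (p + q) := by
  intro U hU
  obtain ⟨S, hS, hterm⟩ := exists_ne_zero_of_sum_ne_zero hU
  have h₁ := hf S fun h => hterm (by simp [h])
  have h₂ := hg (U \ S) fun h => hterm (by simp [h])
  have := card_sdiff_add_card_eq_card (mem_powerset.1 hS)
  omega

lemma IsHomog.smul {f : SAlg R n} {p : ℕ} (hf : IsHomog f p) (c : R) : IsHomog (c • f) p :=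
  fun S hS => hf S fun h => hS (by simp [h])

lemma mul_apply_swap (f g : SAlg R n) (U : Finset (Fin n)) :
    mul g f U =
      ∑ S ∈ U.powerset, ((-1 : ℤ) ^ (#S * #(U \ S)) * eps S (U \ S)) • (f S * g (U \ S)) := by
  refine sum_nbij' (U \ ·) (U \ ·) (fun S _ => by simp) (fun S _ => by simp)
    (fun S hS => Finset.sdiff_sdiff_eq_self (mem_powerset.1 hS))
    (fun S hS => Finset.sdiff_sdiff_eq_self (mem_powerset.1 hS)) fun S hS => ?_
  rw [Finset.sdiff_sdiff_eq_self (mem_powerset.1 hS), eps_swap disjoint_sdiff, ← mul_assoc,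
    mul_comm #(U \ S), ← pow_add, Even.neg_one_pow ⟨_, rfl⟩, one_mul, mul_comm (g S)]

lemma mul_comm_of_isHomog_zero {f : SAlg R n} (hf : IsHomog f 0) (g : SAlg R n) :
    mul g f = mul f g := by
  funext U
  rw [mul_apply_swap]
  refine sum_congr rfl fun S _ => ?_
  by_cases hS : f S = 0
  · simp [hS]
  · rw [pow_mul, hf.neg_one_pow_card hS, pow_zero, one_pow, one_mul]

lemma mul_anticomm_of_isHomog_one {f g : SAlg R n} (hf : IsHomog f 1) (hg : IsHomog g 1) :
    mul g f = -mul f g := by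
  funext U
  rw [mul_apply_swap, Pi.neg_apply, mul, ← sum_neg_distrib]
  refine sum_congr rfl fun S _ => ?_
  by_cases hS : f S = 0
  · simp [hS]
  by_cases hS' : g (U \ S) = 0
  · simp [hS']
  rw [pow_mul, hf.neg_one_pow_card hS, pow_one, hg.neg_one_pow_card hS', pow_one, neg_one_mul,
    neg_smul]

lemma mul_self_eq_zero_of_isHomog_one {f : SAlg R n} (hf : IsHomog f 1) : mul f f = 0 := by
  funext U
  refine sum_involution (fun S _ => U \ S) (fun S hS => ?_) (fun S hS hne hfix => ?_)
    (fun S _ => by simp) (fun S hS => Finset.sdiff_sdiff_eq_self (mem_powerset.1 hS))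
  · rw [Finset.sdiff_sdiff_eq_self (mem_powerset.1 hS), eps_swap disjoint_sdiff.symm]
    by_cases hS : f S = 0
    · simp [hS]
    by_cases hS' : f (U \ S) = 0
    · simp [hS']
    rw [pow_mul, hf.neg_one_pow_card hS', pow_one, hf.neg_one_pow_card hS, pow_one, neg_one_mul,
      neg_smul, mul_comm (f S), neg_add_cancel]
  · have hS0 : S = ∅ := by
      rw [← disjoint_self_iff_empty]
      nth_rewrite 2 [← hfix]
      exact disjoint_sdiff
    subst hS0
    have hf0 : f ∅ = 0 := by_contra fun h => by simpa using hf ∅ h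
    exact hne (by simp [hf0])

def oddPart (f : SAlg R n) : SAlg R n := fun S => if #S % 2 = 1 then f S else 0

lemma oddPart_one : oddPart (one : SAlg R n) = 0 := by
  funext S
  by_cases hS : S = ∅ <;> simp [oddPart, one, hS]

lemma isHomog_zero_of_oddPart_eq_zero {f : SAlg R n} (hf : oddPart f = 0) : IsHomog f 0 := by
  intro S hS
  have := congrFun hf S
  simp only [oddPart, Pi.zero_apply, ite_eq_right_iff] at this
  by_contra h
  exact hS (this (by omega))

lemma oddPart_mul_of_isHomog_zero {s : SAlg R n} (hs : IsHomog s 0) (t : SAlg R n) :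
    oddPart (mul s t) = mul s (oddPart t) := by
  funext U
  have hpar : ∀ S ∈ U.powerset, s S ≠ 0 → (#(U \ S) % 2 = 1 ↔ #U % 2 = 1) := by
    intro S hS h
    have := hs S h
    have := card_sdiff_add_card_eq_card (mem_powerset.1 hS)
    omega
  simp only [oddPart, mul]
  split_ifs with hU
  · refine sum_congr rfl fun S hS => ?_
    by_cases h : s S = 0
    · simp [h]
    · rw [if_pos ((hpar S hS h).2 hU)]
  · refine (sum_eq_zero fun S hS => ?_).symm
    by_cases h : s S = 0
    · simp [h]
    · rw [if_neg (mt (hpar S hS h).1 hU), mul_zero, smul_zero]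

lemma isHomog_zero_of_mul_eq_one {s t : SAlg R n} (hs : IsHomog s 0) (hst : mul s t = one)
    (hts : mul t s = one) : IsHomog t 0 := by
  refine isHomog_zero_of_oddPart_eq_zero ?_
  calc oddPart t = mul (mul t s) (oddPart t) := by rw [hts, OddSymp.one_mul]
    _ = mul t (oddPart (mul s t)) := by rw [OddSymp.mul_assoc, oddPart_mul_of_isHomog_zero hs]
    _ = 0 := by rw [hst, oddPart_one, mul_zero_right]

lemma mul_mul_eq_of_mul_eq_one {s t : SAlg R n} (ht : IsHomog t 0) (hst : mul s t = one)
    (x : SAlg R n) : mul t (mul x s) = x := by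
  rw [← mul_comm_of_isHomog_zero ht, OddSymp.mul_assoc, hst, OddSymp.mul_one]

end Parity

section Derivations

open MvPolynomial in
lemma pderiv_pderiv_comm (i j : Fin n) (p : MvPolynomial (Fin n) R) :
    pderiv i (pderiv j p) = pderiv j (pderiv i p) := by
  induction p using MvPolynomial.induction_on with
  | C a => simp
  | add p q hp hq => simp [hp, hq]
  | mul_X p k hp =>
    have hX : ∀ a b : Fin n, pderiv a (pderiv b (X k : MvPolynomial (Fin n) R)) = 0 := by
      classical
      intro a b
      rw [pderiv_X, Pi.single_apply]
      split_ifs <;> simp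
    simp only [pderiv_mul, map_add, hp, hX]
    ring

lemma pdx_zero (i : Fin n) : pdx i (0 : SAlg R n) = 0 := by
  funext S; simp [pdx]

lemma pdx_add (i : Fin n) (f g : SAlg R n) : pdx i (f + g) = pdx i f + pdx i g := by
  funext S; simp [pdx]

lemma pdx_smul (i : Fin n) (c : R) (f : SAlg R n) : pdx i (c • f) = c • pdx i f := by
  funext S; simp [pdx]

lemma pdx_neg (i : Fin n) (f : SAlg R n) : pdx i (-f) = -pdx i f := by
  funext S; simp [pdx]

lemma pdx_sum {ι : Type*} (i : Fin n) (s : Finset ι) (f : ι → SAlg R n) :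
    pdx i (∑ k ∈ s, f k) = ∑ k ∈ s, pdx i (f k) := by
  funext S; simp [pdx]

lemma pdx_mul (i : Fin n) (f g : SAlg R n) :
    pdx i (mul f g) = mul (pdx i f) g + mul f (pdx i g) := by
  funext U
  simp only [pdx, mul, Pi.add_apply, map_sum, ← sum_add_distrib, map_zsmul,
    MvPolynomial.pderiv_mul, smul_add]

lemma pdx_comm (i j : Fin n) (f : SAlg R n) : pdx i (pdx j f) = pdx j (pdx i f) := by
  funext S; exact pderiv_pderiv_comm i j (f S)

lemma isHomog_pdx {f : SAlg R n} {p : ℕ} (hf : IsHomog f p) (i : Fin n) :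
    IsHomog (pdx i f) p :=
  fun S hS => hf S fun h => hS (by simp [pdx, h])

lemma pdθ_apply_of_mem {i : Fin n} {T : Finset (Fin n)} (h : i ∈ T) (f : SAlg R n) :
    pdθ i f T = 0 := if_pos h

lemma pdθ_apply_of_notMem {i : Fin n} {T : Finset (Fin n)} (h : i ∉ T) (f : SAlg R n) :
    pdθ i f T = (-1) ^ #{j ∈ T | j < i} • f (insert i T) := if_neg h

lemma pdθ_zero (i : Fin n) : pdθ i (0 : SAlg R n) = 0 := by
  funext T; by_cases h : i ∈ T <;> simp [pdθ, h]

lemma pdθ_add (i : Fin n) (f g : SAlg R n) : pdθ i (f + g) = pdθ i f + pdθ i g := by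
  funext T; by_cases h : i ∈ T <;> simp [pdθ, h]

lemma pdθ_smul (i : Fin n) (c : R) (f : SAlg R n) : pdθ i (c • f) = c • pdθ i f := by
  funext T; by_cases h : i ∈ T <;> simp [pdθ, h]

lemma pdθ_sum {ι : Type*} (i : Fin n) (s : Finset ι) (f : ι → SAlg R n) :
    pdθ i (∑ k ∈ s, f k) = ∑ k ∈ s, pdθ i (f k) := by
  funext T; by_cases h : i ∈ T <;> simp [pdθ, h, smul_sum]

lemma pdx_pdθ_comm (i j : Fin n) (f : SAlg R n) : pdx i (pdθ j f) = pdθ j (pdx i f) := by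
  funext T; by_cases h : j ∈ T <;> simp [pdx, pdθ, h]

lemma pdθ_pdθ_self (i : Fin n) (f : SAlg R n) : pdθ i (pdθ i f) = 0 := by
  funext T
  by_cases h : i ∈ T
  · exact pdθ_apply_of_mem h _
  · rw [pdθ_apply_of_notMem h, pdθ_apply_of_mem (mem_insert_self i T), smul_zero]; rfl

lemma pdθ_pdθ_apply_of_mem {i : Fin n} {T : Finset (Fin n)} (h : i ∈ T) (j : Fin n)
    (f : SAlg R n) : pdθ j (pdθ i f) T = 0 := by
  by_cases hj : j ∈ T
  · exact pdθ_apply_of_mem hj _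
  · rw [pdθ_apply_of_notMem hj, pdθ_apply_of_mem (mem_insert_of_mem h), smul_zero]

lemma card_filter_lt_insert {i j : Fin n} {T : Finset (Fin n)} (hiT : i ∉ T) :
    #{k ∈ insert i T | k < j} = #{k ∈ T | k < j} + if i < j then 1 else 0 := by
  rw [filter_insert]
  split_ifs with h
  · exact card_insert_of_notMem fun hi => hiT (mem_filter.1 hi).1
  · rfl

lemma pdθ_anticomm (i j : Fin n) (f : SAlg R n) : pdθ i (pdθ j f) = -pdθ j (pdθ i f) := by
  rcases eq_or_ne i j with rfl | hij
  · rw [pdθ_pdθ_self, neg_zero]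
  funext T
  by_cases hi : i ∈ T
  · rw [Pi.neg_apply, pdθ_apply_of_mem hi, pdθ_pdθ_apply_of_mem hi, neg_zero]
  by_cases hj : j ∈ T
  · rw [Pi.neg_apply, pdθ_apply_of_mem hj, pdθ_pdθ_apply_of_mem hj, neg_zero]
  have hji : j ∉ insert i T := by simp [hj, Ne.symm hij]
  have hij' : i ∉ insert j T := by simp [hi, hij]
  rw [Pi.neg_apply, pdθ_apply_of_notMem hi, pdθ_apply_of_notMem hji, pdθ_apply_of_notMem hj,
    pdθ_apply_of_notMem hij', card_filter_lt_insert hi, card_filter_lt_insert hj, insert_comm,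
    smul_smul, smul_smul, ← neg_smul]
  congr 1
  rcases lt_or_gt_of_ne hij with h | h <;> simp [h, not_lt_of_gt h, pow_succ] <;> ring

lemma isHomog_pdθ {f : SAlg R n} {p : ℕ} (hf : IsHomog f p) (i : Fin n) :
    IsHomog (pdθ i f) (p + 1) := by
  intro T hT
  by_cases h : i ∈ T
  · exact absurd (pdθ_apply_of_mem h f) hT
  rw [pdθ_apply_of_notMem h] at hT
  have := hf _ fun h0 => hT (by rw [h0, smul_zero])
  rw [card_insert_of_notMem h] at this
  omega

lemma isHomog_zero_of_forall_isHomog_pdθ {f : SAlg R n} (hf : ∀ i, IsHomog (pdθ i f) 1) :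
    IsHomog f 0 := by
  intro S hS
  obtain rfl | ⟨i, hi⟩ := S.eq_empty_or_nonempty
  · rfl
  have hne : pdθ i f (S.erase i) ≠ 0 := by
    rw [pdθ_apply_of_notMem (notMem_erase i S), insert_erase hi]
    exact fun h => hS (by simpa using congrArg (((-1 : ℤ) ^ #{j ∈ S.erase i | j < i}) • ·) h)
  have := hf i _ hne
  rw [← insert_erase hi, card_insert_of_notMem (notMem_erase i S)]
  omega

end Derivations

section Leibniz

lemma card_filter_lt_of_subset {S T : Finset (Fin n)} (h : S ⊆ T) (i : Fin n) :
    #{j ∈ T | j < i} = #{j ∈ S | j < i} + #{j ∈ T \ S | j < i} := by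
  rw [← card_union_of_disjoint (disjoint_filter_filter disjoint_sdiff), ← filter_union,
    union_sdiff_of_subset h]

lemma IsHomog.neg_one_pow_card_of_insert {f : SAlg R n} {p : ℕ} (hf : IsHomog f p) {i : Fin n}
    {S : Finset (Fin n)} (hiS : i ∉ S) (h : f (insert i S) ≠ 0) :
    (-1 : ℤ) ^ #S = -(-1) ^ p := by
  rw [← hf.neg_one_pow_card h, card_insert_of_notMem hiS, pow_succ, mul_neg_one, neg_neg]

lemma pdθ_mul_apply_of_notMem {f : SAlg R n} {p : ℕ} (hf : IsHomog f p) (g : SAlg R n)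
    {i : Fin n} {T : Finset (Fin n)} (hiT : i ∉ T) :
    pdθ i (mul f g) T = (mul (pdθ i f) g + ((-1 : ℤ) ^ p) • mul f (pdθ i g)) T := by
  rw [pdθ_apply_of_notMem hiT, mul, sum_powerset_insert hiT, smul_add, add_comm, Pi.add_apply,
    Pi.smul_apply, mul, mul, smul_sum, smul_sum, smul_sum]
  congr 1 <;> refine sum_congr rfl fun S hS => ?_ <;>
    have hST := mem_powerset.1 hS <;> have hiS : i ∉ S := fun h => hiT (hST h)
  · rw [insert_sdiff_insert, sdiff_insert_of_notMem hiT, pdθ_apply_of_notMem hiS,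
      eps_insert_left hiS, card_filter_lt_of_subset hST, smul_mul_assoc, smul_smul, smul_smul,
      pow_add]
    congr 1
    have hsq := pow_mul_pow_eq_one (a := (-1 : ℤ)) (b := -1) #{j ∈ T \ S | j < i} rfl
    linear_combination ((-1 : ℤ) ^ #{j ∈ S | j < i} * eps S (T \ S)) * hsq
  · have hiTS : i ∉ T \ S := fun h => hiT (mem_sdiff.1 h).1
    rw [insert_sdiff_of_notMem _ hiS, pdθ_apply_of_notMem hiTS, eps_insert_right S hiTS,
      mul_smul_comm, smul_smul, smul_smul, smul_smul, card_filter_lt_of_subset hST, pow_add]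
    by_cases hfS : f S = 0
    · simp [hfS]
    congr 1
    have hsign := hf.neg_one_pow_card hfS
    rw [← neg_one_pow_card_filter_lt_add_gt hiS] at hsign
    linear_combination ((-1 : ℤ) ^ #{j ∈ T \ S | j < i} * eps S (T \ S)) * hsign

lemma pdθ_mul_apply_of_mem {f : SAlg R n} {p : ℕ} (hf : IsHomog f p) (g : SAlg R n)
    {i : Fin n} {T : Finset (Fin n)} (hiT : i ∈ T) :
    pdθ i (mul f g) T = (mul (pdθ i f) g + ((-1 : ℤ) ^ p) • mul f (pdθ i g)) T := by
  obtain ⟨T, hiT', rfl⟩ : ∃ T', i ∉ T' ∧ T = insert i T' :=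
    ⟨T.erase i, notMem_erase i T, (insert_erase hiT).symm⟩
  rw [pdθ_apply_of_mem hiT, Pi.add_apply, Pi.smul_apply, mul, mul, smul_sum, ← sum_add_distrib,
    sum_powerset_insert hiT', ← sum_add_distrib]
  refine (sum_eq_zero fun S hS => ?_).symm
  have hST := mem_powerset.1 hS
  have hiS : i ∉ S := fun h => hiT' (hST h)
  have hiTS : i ∉ T \ S := fun h => hiT' (mem_sdiff.1 h).1
  rw [insert_sdiff_of_notMem _ hiS, insert_sdiff_insert, sdiff_insert_of_notMem hiT',
    pdθ_apply_of_notMem hiS, pdθ_apply_of_mem (mem_insert_self i _),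
    pdθ_apply_of_mem (mem_insert_self i S), pdθ_apply_of_notMem hiTS, eps_insert_right S hiTS,
    eps_insert_left hiS]
  by_cases hfS : f (insert i S) = 0
  · simp [hfS]
  have hsign := hf.neg_one_pow_card_of_insert hiS hfS
  rw [← neg_one_pow_card_filter_lt_add_gt hiS] at hsign
  simp only [mul_zero, zero_mul, smul_zero, add_zero, zero_add, smul_mul_assoc, mul_smul_comm,
    smul_smul, ← add_smul]
  convert zero_smul ℤ (f (insert i S) * g (insert i (T \ S)))
  have hsq := pow_mul_pow_eq_one (a := (-1 : ℤ)) (b := -1) #{j ∈ T \ S | j < i} rfl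
  linear_combination (eps S (T \ S)) * hsign + ((-1 : ℤ) ^ p * eps S (T \ S)) * hsq

lemma pdθ_mul {f : SAlg R n} {p : ℕ} (hf : IsHomog f p) (i : Fin n) (g : SAlg R n) :
    pdθ i (mul f g) = mul (pdθ i f) g + ((-1 : ℤ) ^ p) • mul f (pdθ i g) := by
  funext T
  by_cases hiT : i ∈ T
  · exact pdθ_mul_apply_of_mem hf g hiT
  · exact pdθ_mul_apply_of_notMem hf g hiT

end Leibniz

section BV

lemma sum_sum_eq_zero_of_antisymm {ι M : Type*} [Fintype ι] [AddCommGroup M] {F : ι → ι → M}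
    (hanti : ∀ i j, F i j = -F j i) (hdiag : ∀ i, F i i = 0) : ∑ i, ∑ j, F i j = 0 := by
  rw [← sum_product']
  refine sum_involution (fun p _ => p.swap) (fun p _ => by simp [hanti p.1 p.2])
    (fun p _ hp hfix => hp ?_) (fun p _ => mem_univ _) (fun p _ => p.swap_swap)
  obtain ⟨i, j⟩ := p
  obtain rfl : j = i := congrArg Prod.fst hfix
  exact hdiag j

lemma delta0_add (f g : SAlg R n) : delta0 (f + g) = delta0 f + delta0 g := by
  simp only [delta0, pdθ_add, pdx_add, sum_add_distrib]

lemma delta0_smul (c : R) (f : SAlg R n) : delta0 (c • f) = c • delta0 f := by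
  simp only [delta0, pdθ_smul, pdx_smul, smul_sum]

lemma pdx_delta0 (i : Fin n) (f : SAlg R n) : pdx i (delta0 f) = delta0 (pdx i f) := by
  simp only [delta0, pdx_sum, pdx_comm i, pdx_pdθ_comm i]

lemma pdθ_delta0 (i : Fin n) (f : SAlg R n) : pdθ i (delta0 f) = -delta0 (pdθ i f) := by
  simp only [delta0, pdθ_sum, ← pdx_pdθ_comm, pdθ_anticomm i, pdx_neg, sum_neg_distrib]

lemma delta0_delta0 (f : SAlg R n) : delta0 (delta0 f) = 0 := by
  have hexp : delta0 (delta0 f) = ∑ i, ∑ j, pdx i (pdx j (pdθ i (pdθ j f))) := by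
    simp only [delta0, pdθ_sum, pdx_sum, pdx_pdθ_comm]
  rw [hexp]
  exact sum_sum_eq_zero_of_antisymm
    (fun i j => by rw [pdθ_anticomm i, pdx_neg, pdx_neg, pdx_comm i])
    (fun i => by rw [pdθ_pdθ_self, pdx_zero, pdx_zero])

lemma bracket_zero_eq_sum (a f : SAlg R n) :
    bracket 0 a f = ∑ i, (mul (pdx i a) (pdθ i f) + mul (pdθ i a) (pdx i f)) := by
  simp only [bracket, pow_zero, one_smul]

lemma bracket_one_eq_sum (a f : SAlg R n) :
    bracket 1 a f = ∑ i, (mul (pdx i a) (pdθ i f) - mul (pdθ i a) (pdx i f)) := by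
  simp only [bracket, pow_one, neg_one_zsmul, sub_eq_add_neg]

lemma bracket_one_eq_sum_of_pdx_pdθ {σ : SAlg R n} {P Q : Fin n → SAlg R n}
    (hP : ∀ i, pdx i σ = P i) (hQ : ∀ i, pdθ i σ = -Q i) (f : SAlg R n) :
    bracket 1 σ f = ∑ i, (mul (P i) (pdθ i f) + mul (Q i) (pdx i f)) := by
  simp only [bracket_one_eq_sum, hP, hQ, mul_neg_left, sub_neg_eq_add]

lemma bracket_add_left (p : ℕ) (a b f : SAlg R n) :
    bracket p (a + b) f = bracket p a f + bracket p b f := by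
  simp only [bracket, pdx_add, pdθ_add, mul_add_left, smul_add, sum_add_distrib]
  abel

lemma bracket_smul_left (p : ℕ) (c : R) (a f : SAlg R n) :
    bracket p (c • a) f = c • bracket p a f := by
  simp only [bracket, pdx_smul, pdθ_smul, mul_smul_left, smul_add, smul_sum, smul_comm c]

lemma bracket_add_right (p : ℕ) (a f g : SAlg R n) :
    bracket p a (f + g) = bracket p a f + bracket p a g := by
  simp only [bracket, pdx_add, pdθ_add, mul_add_right, smul_add, sum_add_distrib]
  abel

lemma bracket_smul_right (p : ℕ) (c : R) (a f : SAlg R n) :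
    bracket p a (c • f) = c • bracket p a f := by
  simp only [bracket, pdx_smul, pdθ_smul, mul_smul_right, smul_add, smul_sum, smul_comm c]

lemma bracket_zero_left (p : ℕ) (g : SAlg R n) : bracket p 0 g = 0 := by
  simp [bracket, pdx_zero, pdθ_zero, mul_zero_left]

end BV

section Identities

variable {a : SAlg R n}

-- Keeps `abel` from unfolding the products and derivatives it should treat as atoms.
attribute [local irreducible] mul pdx pdθ

def delta0BracketRemainder (a f : SAlg R n) (i j : Fin n) : SAlg R n :=
  mul (pdx j (pdx i a)) (pdθ j (pdθ i f)) + mul (pdθ j (pdθ i a)) (pdx j (pdx i f))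
    + (mul (pdx i (pdθ j a)) (pdx j (pdθ i f)) - mul (pdx j (pdθ i a)) (pdx i (pdθ j f)))

lemma sum_delta0BracketRemainder (a f : SAlg R n) :
    ∑ i, ∑ j, delta0BracketRemainder a f i j = 0 := by
  refine sum_sum_eq_zero_of_antisymm (fun i j => ?_) (fun i => ?_) <;>
    simp only [delta0BracketRemainder]
  · simp only [pdx_comm i j, pdθ_anticomm i j, mul_neg_right, mul_neg_left]
    abel
  · simp only [pdθ_pdθ_self, mul_zero_left, mul_zero_right, sub_self, add_zero]

lemma pdx_pdθ_bracket_summand (ha : IsHomog a 0) (f : SAlg R n) (i j : Fin n) :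
    pdx j (pdθ j (mul (pdx i a) (pdθ i f) + mul (pdθ i a) (pdx i f)))
      + (mul (pdx i a) (pdθ i (pdx j (pdθ j f))) + mul (pdθ i a) (pdx i (pdx j (pdθ j f))))
    = mul (pdx j (pdθ j (pdx i a))) (pdθ i f) + mul (pdx j (pdθ j (pdθ i a))) (pdx i f)
      + delta0BracketRemainder a f i j := by
  rw [pdθ_add, pdθ_mul (isHomog_pdx ha i), pdθ_mul (isHomog_pdθ ha i), delta0BracketRemainder]
  simp only [pow_zero, zero_add, pow_one, one_smul, neg_one_zsmul, pdx_add, pdx_neg, pdx_mul,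
    mul_neg_right, ← pdx_pdθ_comm, pdθ_anticomm i j, pdx_comm i j]
  abel

lemma delta0_bracket_add_bracket_delta0 (ha : IsHomog a 0) (f : SAlg R n) :
    delta0 (bracket 0 a f) + bracket 0 a (delta0 f) = bracket 1 (delta0 a) f := by
  have hexp : delta0 (bracket 0 a f) + bracket 0 a (delta0 f) = ∑ i, ∑ j,
      (pdx j (pdθ j (mul (pdx i a) (pdθ i f) + mul (pdθ i a) (pdx i f)))
        + (mul (pdx i a) (pdθ i (pdx j (pdθ j f))) + mul (pdθ i a) (pdx i (pdx j (pdθ j f))))) := by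
    rw [delta0, bracket_zero_eq_sum, bracket_zero_eq_sum]
    simp only [pdθ_sum, pdx_sum]
    rw [sum_comm, ← sum_add_distrib]
    simp only [delta0, pdθ_sum, pdx_sum, mul_sum_right, ← sum_add_distrib]
  rw [hexp, bracket_one_eq_sum_of_pdx_pdθ (pdx_delta0 · a) (pdθ_delta0 · a)]
  simp only [pdx_pdθ_bracket_summand ha, sum_add_distrib, sum_delta0BracketRemainder, add_zero,
    delta0, mul_sum_left]

def bracketBracketRemainder (a f : SAlg R n) (i j : Fin n) : SAlg R n :=
  mul (mul (pdx j a) (pdx i a)) (pdθ j (pdθ i f)) + mul (mul (pdθ j a) (pdθ i a)) (pdx j (pdx i f))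
    + (mul (mul (pdθ j a) (pdx i a)) (pdx j (pdθ i f))
      - mul (mul (pdx j a) (pdθ i a)) (pdx i (pdθ j f)))

lemma sum_bracketBracketRemainder (ha : IsHomog a 0) (f : SAlg R n) :
    ∑ i, ∑ j, bracketBracketRemainder a f i j = 0 := by
  have hA := isHomog_pdx ha
  have hB := isHomog_pdθ ha
  refine sum_sum_eq_zero_of_antisymm (fun i j => ?_) (fun i => ?_) <;>
    simp only [bracketBracketRemainder]
  · simp only [pdx_comm i j, pdθ_anticomm i j, mul_comm_of_isHomog_zero (hA j) (pdx i a),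
      mul_anticomm_of_isHomog_one (hB j) (hB i), mul_comm_of_isHomog_zero (hA j) (pdθ i a),
      ← mul_comm_of_isHomog_zero (hA i) (pdθ j a), mul_neg_right, mul_neg_left]
    abel
  · simp only [pdθ_pdθ_self, mul_self_eq_zero_of_isHomog_one (hB i),
      mul_comm_of_isHomog_zero (hA i) (pdθ i a), mul_zero_left, mul_zero_right, sub_self,
      add_zero]

lemma bracket_summand_bracket_summand (ha : IsHomog a 0) (f : SAlg R n) (i j : Fin n) :
    mul (pdx j a) (pdθ j (mul (pdx i a) (pdθ i f) + mul (pdθ i a) (pdx i f)))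
      + mul (pdθ j a) (pdx j (mul (pdx i a) (pdθ i f) + mul (pdθ i a) (pdx i f)))
    = mul (mul (pdx j a) (pdθ j (pdx i a)) + mul (pdθ j a) (pdx j (pdx i a))) (pdθ i f)
      + mul (mul (pdx j a) (pdθ j (pdθ i a)) + mul (pdθ j a) (pdx j (pdθ i a))) (pdx i f)
      + bracketBracketRemainder a f i j := by
  rw [pdθ_add, pdθ_mul (isHomog_pdx ha i), pdθ_mul (isHomog_pdθ ha i),
    bracketBracketRemainder]
  simp only [pow_zero, zero_add, pow_one, one_smul, neg_one_zsmul, pdx_add, pdx_mul,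
    mul_add_right, mul_add_left, mul_neg_right, ← OddSymp.mul_assoc, ← pdx_pdθ_comm]
  abel

lemma pdx_sum_mul_pdθ_pdx (ha : IsHomog a 0) (i : Fin n) :
    pdx i (∑ j, mul (pdθ j a) (pdx j a)) = bracket 0 a (pdx i a) := by
  rw [pdx_sum, bracket_zero_eq_sum]
  refine sum_congr rfl fun j _ => ?_
  rw [pdx_mul, pdx_comm i j, pdx_pdθ_comm,
    mul_comm_of_isHomog_zero (isHomog_pdx ha j) (pdθ j (pdx i a))]

lemma pdθ_sum_mul_pdθ_pdx (ha : IsHomog a 0) (i : Fin n) :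
    pdθ i (∑ j, mul (pdθ j a) (pdx j a)) = -bracket 0 a (pdθ i a) := by
  rw [pdθ_sum, bracket_zero_eq_sum, ← sum_neg_distrib]
  refine sum_congr rfl fun j _ => ?_
  rw [pdθ_mul (isHomog_pdθ ha j), pdθ_anticomm i j, ← pdx_pdθ_comm j i, pow_one, neg_one_zsmul,
    mul_neg_left, mul_comm_of_isHomog_zero (isHomog_pdx ha j) (pdθ j (pdθ i a))]
  abel

/-- For even `a`, `∑ j, ∂a/∂θⱼ · ∂a/∂xʲ = ½ {a, a}`, so this is the Jacobi identity
`{a, {a, f}} = ½ {{a, a}, f}`. -/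
lemma bracket_bracket_self (ha : IsHomog a 0) (f : SAlg R n) :
    bracket 0 a (bracket 0 a f) = bracket 1 (∑ j, mul (pdθ j a) (pdx j a)) f := by
  rw [bracket_one_eq_sum_of_pdx_pdθ (pdx_sum_mul_pdθ_pdx ha) (pdθ_sum_mul_pdθ_pdx ha),
    bracket_zero_eq_sum a (bracket 0 a f), bracket_zero_eq_sum a f]
  simp only [pdθ_sum, pdx_sum, mul_sum_right, ← sum_add_distrib]
  rw [sum_comm]
  simp only [bracket_summand_bracket_summand ha, sum_add_distrib, sum_bracketBracketRemainder ha, add_zero,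
    bracket_zero_eq_sum, mul_add_left, mul_sum_left]

end Identities

end CommRing

section Real

variable {n : ℕ}

/-- `ρ^{-1/2} Δ₀ ρ^{1/2}`, written in terms of `l = log ρ`. -/
def sigma (l : SAlg ℝ n) : SAlg ℝ n :=
  (2 : ℝ)⁻¹ • delta0 l + (4 : ℝ)⁻¹ • ∑ j, mul (pdθ j l) (pdx j l)

lemma deltaRho_deltaRho {l : SAlg ℝ n} (hl : IsHomog l 0) (f : SAlg ℝ n) :
    DeltaRho l (DeltaRho l f) = bracket 1 (sigma l) f := by
  have hexp : DeltaRho l (DeltaRho l f) = delta0 (delta0 f)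
      + (2 : ℝ)⁻¹ • (delta0 (bracket 0 l f) + bracket 0 l (delta0 f))
      + (4 : ℝ)⁻¹ • bracket 0 l (bracket 0 l f) := by
    simp only [DeltaRho, delta0_add, delta0_smul, bracket_add_right, bracket_smul_right, smul_add,
      smul_smul]
    norm_num
    abel
  rw [hexp, delta0_delta0, zero_add, delta0_bracket_add_bracket_delta0 hl, bracket_bracket_self hl,
    sigma, bracket_add_left, bracket_smul_left, bracket_smul_left]

lemma delta0_eq_sigma_mul {l s : SAlg ℝ n}
    (hx : ∀ i : Fin n, pdx i s = ((2 : ℝ)⁻¹) • mul (pdx i l) s)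
    (hθ : ∀ i : Fin n, pdθ i s = ((2 : ℝ)⁻¹) • mul (pdθ i l) s) :
    delta0 s = mul (sigma l) s := by
  simp only [delta0, hθ, pdx_smul, pdx_mul, hx, sigma, mul_add_left, mul_smul_left,
    mul_smul_right, mul_sum_left, smul_add, smul_smul, smul_sum, sum_add_distrib,
    OddSymp.mul_assoc]
  norm_num

lemma isHomog_zero_of_pdθ_eq_half_mul {l s t : SAlg ℝ n} (hs : IsHomog s 0) (ht : IsHomog t 0)
    (hθ : ∀ i : Fin n, pdθ i s = ((2 : ℝ)⁻¹) • mul (pdθ i l) s) (hst : mul s t = one) :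
    IsHomog l 0 := by
  refine isHomog_zero_of_forall_isHomog_pdθ fun i => ?_
  have h : pdθ i l = (2 : ℝ) • mul (pdθ i s) t := by
    rw [hθ, mul_smul_left, OddSymp.mul_assoc, hst, OddSymp.mul_one, smul_smul]
    norm_num
  rw [h]
  exact (isHomog_mul (isHomog_pdθ hs i) ht).smul 2

end Real

end OddSymp

/-- Here `l = log ρ`, `s = √ρ` and `t = s⁻¹`; `hx` and `hθ` encode the chain rule
`∂s = ½ (∂l) s`. -/
theorem stmt18 {n : ℕ} (l s t : SAlg ℝ n)
    (hseven : IsHomog s 0)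
    (hx : ∀ i : Fin n, pdx i s = ((2 : ℝ)⁻¹) • mul (pdx i l) s)
    (hθ : ∀ i : Fin n, pdθ i s = ((2 : ℝ)⁻¹) • mul (pdθ i l) s)
    (hst : mul s t = one) (hts : mul t s = one) :
    (∀ f : SAlg ℝ n, DeltaRho l (DeltaRho l f) = bracket 1 (mul t (delta0 s)) f)
    ∧ ((∀ f : SAlg ℝ n, DeltaRho l (DeltaRho l f) = 0) ↔
        ∃ ν : SAlg ℝ n, delta0 s = mul ν s ∧ ∀ g : SAlg ℝ n, bracket 1 ν g = 0)
    ∧ (delta0 s = 0 → ∀ f : SAlg ℝ n, DeltaRho l (DeltaRho l f) = 0) := by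
  have ht : IsHomog t 0 := isHomog_zero_of_mul_eq_one hseven hst hts
  have hl : IsHomog l 0 := isHomog_zero_of_pdθ_eq_half_mul hseven ht hθ hst
  have hσ : mul t (delta0 s) = sigma l := by
    rw [delta0_eq_sigma_mul hx hθ, mul_mul_eq_of_mul_eq_one ht hst]
  have hΔ : ∀ f, DeltaRho l (DeltaRho l f) = bracket 1 (mul t (delta0 s)) f := fun f => by
    rw [hσ, deltaRho_deltaRho hl]
  refine ⟨hΔ, ⟨fun h => ⟨sigma l, delta0_eq_sigma_mul hx hθ, fun g => ?_⟩, ?_⟩, ?_⟩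
  · rw [← hσ, ← hΔ]
    exact h g
  · rintro ⟨ν, hν, hνb⟩ f
    rw [hΔ, hν, mul_mul_eq_of_mul_eq_one ht hst]
    exact hνb f
  · intro h0 f
    rw [hΔ, h0, mul_zero_right, bracket_zero_left]

end
end
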